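/- arXiv:1707.06748 — 2 statements merged into one kernel-verified Lean document; each statement's English description precedes it below -/
import Mathlib

section
/- Let S, T : Matrix (Fin 2) (Fin 2) ℂ be hermitian matrices (Sᴴ = S and Tᴴ = T) with S * T ≠ T * S. Then S and T generate the full matrix algebra: Algebra.adjoin ℂ {S, T} = ⊤. -/
/-!
The commutator `C = ST - TS` of two hermitian matrices is skew-hermitian, so
`tr (C * C) = -tr (Cᴴ * C) ≠ 0` as soon as `C ≠ 0`. For any matrices `A, B` with
`C = AB - BA` this forces `1, A, B, C` to be linearly independent: `C` is trace-orthogonal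
to `1, A, B`, which pins down the coefficient of `C`, and the commutator of a relation among
`1, A, B` with `A` or with `B` is a multiple of `C`. Four independent elements of the
`4`-dimensional algebra `M₂(K)` lying in `Algebra.adjoin K {A, B}` span everything.
-/

open Matrix

namespace Matrix

variable {n : Type*} [Fintype n]

section CommRing

variable {R : Type*} [CommRing R]

theorem trace_commutator (A B : Matrix n n R) : trace (A * B - B * A) = 0 := by
  rw [trace_sub, trace_mul_comm, sub_self]

theorem trace_mul_commutator_left (A B : Matrix n n R) : trace (A * (A * B - B * A)) = 0 := by
  rw [mul_sub, trace_sub, ← mul_assoc, ← mul_assoc, trace_mul_cycle A B A, sub_self]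

theorem trace_mul_commutator_right (A B : Matrix n n R) : trace (B * (A * B - B * A)) = 0 := by
  rw [mul_sub, trace_sub, ← mul_assoc, ← mul_assoc, trace_mul_cycle B A B, sub_self]

end CommRing

theorem trace_commutator_mul_self_ne_zero {R : Type*} [Ring R] [PartialOrder R] [StarRing R]
    [StarOrderedRing R] [NoZeroDivisors R] {A B : Matrix n n R}
    (hA : A.IsHermitian) (hB : B.IsHermitian) (h : A * B ≠ B * A) :
    trace ((A * B - B * A) * (A * B - B * A)) ≠ 0 := by
  set C := A * B - B * A
  have skew : Cᴴ = -C := by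
    rw [conjTranspose_sub, conjTranspose_mul, conjTranspose_mul, hA.eq, hB.eq, neg_sub]
  have hCC : C * C = -(Cᴴ * C) := by rw [skew, neg_mul, neg_neg]
  rw [hCC, trace_neg, neg_ne_zero, Ne, trace_conjTranspose_mul_self_eq_zero_iff]
  exact sub_ne_zero.mpr h

theorem linearIndependent_one_commutator {K : Type*} [Field K] [DecidableEq n] [Nonempty n]
    {A B : Matrix n n K} (h : trace ((A * B - B * A) * (A * B - B * A)) ≠ 0) :
    LinearIndependent K ![1, A, B, A * B - B * A] := by
  have hC : A * B - B * A ≠ 0 := by rintro hC; simp [hC] at h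
  rw [Fintype.linearIndependent_iff]
  intro g hg
  simp only [Fin.sum_univ_four, Matrix.cons_val] at hg
  have h3 : g 3 = 0 := by
    have := congrArg (fun M => trace (M * (A * B - B * A))) hg
    simp only [add_mul, smul_mul_assoc, one_mul, trace_add, trace_smul, trace_commutator,
      trace_mul_commutator_left, trace_mul_commutator_right, zero_mul, trace_zero] at this
    simpa [h] using this
  set X := g 0 • (1 : Matrix n n K) + g 1 • A + g 2 • B
  have hX : X = 0 := by simpa [h3] using hg
  have h2 : g 2 • (A * B - B * A) = A * X - X * A := by simp only [X]; noncomm_ring; module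
  have h1 : g 1 • (A * B - B * A) = X * B - B * X := by simp only [X]; noncomm_ring; module
  rw [hX, mul_zero, zero_mul, sub_zero, smul_eq_zero] at h1 h2
  have h0 : g 0 = 0 := by simpa [X, h1.resolve_right hC, h2.resolve_right hC] using hX
  intro i
  fin_cases i <;> simp_all

theorem adjoin_eq_top_of_trace_commutator_mul_self_ne_zero {K : Type*} [Field K] [DecidableEq n]
    (hn : Fintype.card n = 2) {A B : Matrix n n K}
    (h : trace ((A * B - B * A) * (A * B - B * A)) ≠ 0) :
    Algebra.adjoin K {A, B} = ⊤ := by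
  have : Nonempty n := Fintype.card_pos_iff.mp (by omega)
  have hA : A ∈ Algebra.adjoin K {A, B} := Algebra.subset_adjoin (by simp)
  have hB : B ∈ Algebra.adjoin K {A, B} := Algebra.subset_adjoin (by simp)
  rw [← Algebra.toSubmodule_eq_top, eq_top_iff, ← (linearIndependent_one_commutator h)
    |>.span_eq_top_of_card_eq_finrank' (by simp [Module.finrank_matrix, hn]), Submodule.span_le,
    Set.range_subset_iff]
  intro i
  rw [SetLike.mem_coe, Subalgebra.mem_toSubmodule]
  fin_cases i
  exacts [one_mem _, hA, hB, sub_mem (mul_mem hA hB) (mul_mem hB hA)]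

end Matrix

open scoped ComplexOrder

/-- Two noncommuting hermitian `2 × 2` complex matrices generate the full
matrix algebra `M₂(ℂ)`. -/
theorem noncommuting_hermitian_two_by_two_generate_full_algebra
    (S T : Matrix (Fin 2) (Fin 2) ℂ)
    (hS : Sᴴ = S) (hT : Tᴴ = T) (hST : S * T ≠ T * S) :
    Algebra.adjoin ℂ {S, T} = ⊤ :=
  adjoin_eq_top_of_trace_commutator_mul_self_ne_zero (Fintype.card_fin 2)
    (trace_commutator_mul_self_ne_zero hS hT hST)
end

section
/- With A and B the matrices of the Laffey-type family (see context), set H := A * A and K := A * B + B * A, and let H' and K' be the complex matrices obtained by mapping the entries of H and K along the inclusion ℝ → ℂ. Then H' and K' generate the full matrix algebra: Algebra.adjoin ℂ {H', K'} = ⊤ in Matrix (Fin n × Fin 2) (Fin n × Fin 2) ℂ. (Together with the even-multiplicity property of the eigenvalues of x • H + y • K, this gives a one-parameter family of counterexamples to Kippenhahn's conjecture in every even size 2n ≥ 8.) -/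
open Matrix

/-- The 2×2 matrix `α`. -/
noncomputable def alphaM : Matrix (Fin 2) (Fin 2) ℝ := !![1, 0; 0, -1]

/-- The 2×2 matrix `β`. -/
noncomputable def betaM (b : ℝ) : Matrix (Fin 2) (Fin 2) ℝ := !![0, b; b, 0]

/-- The 2×2 matrix `U`. -/
noncomputable def uM : Matrix (Fin 2) (Fin 2) ℝ := !![0, -1; 1, 0]

/-- The strictly-upper 2-blocks of the Laffey-type family matrix `A`:
`blk A 0 3 = α + β`, `blk A 0 j = α` for the other `j > 0`,
`blk A 1 2 = blk A 1 3 = α`, and all other strictly-upper 2-blocks vanish. -/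
noncomputable def upBlk (b : ℝ) (i j : ℕ) : Matrix (Fin 2) (Fin 2) ℝ :=
  if i = 0 then (if j = 3 then alphaM + betaM b else alphaM)
  else if i = 1 ∧ (j = 2 ∨ j = 3) then alphaM
  else 0

/-- The Laffey-type family matrix `A`: skew-symmetric, with diagonal 2-blocks
`(i+1) • U` and strictly-upper 2-blocks given by `upBlk`. -/
noncomputable def laffeyA (n : ℕ) (b : ℝ) : Matrix (Fin n × Fin 2) (Fin n × Fin 2) ℝ :=
  Matrix.of fun p q =>
    if p.1 = q.1 then (((p.1 : ℕ) + 1) • uM) p.2 q.2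
    else if (p.1 : ℕ) < (q.1 : ℕ) then upBlk b (p.1 : ℕ) (q.1 : ℕ) p.2 q.2
    else (-(upBlk b (q.1 : ℕ) (p.1 : ℕ))ᵀ) p.2 q.2

/-- The matrix `B`: block diagonal with every diagonal 2-block equal to `U`. -/
noncomputable def laffeyB (n : ℕ) : Matrix (Fin n × Fin 2) (Fin n × Fin 2) ℝ :=
  Matrix.of fun p q => if p.1 = q.1 then uM p.2 q.2 else 0


/-!
`K = AB + BA` is block diagonal with pairwise distinct scalar blocks `-2(i+1)`, so Lagrange
interpolation in `K` yields the block projections `Pᵢ`. Compressing `H = A²` gives the blocks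
`P₀ H Pⱼ = E₀ⱼ ⊗ Xⱼ` and, `H` being symmetric, `Pⱼ H P₀ = Eⱼ₀ ⊗ Xⱼᵀ`, where every `Xⱼ` is
invertible. The Gram matrices `X₁X₁ᵀ` and `X₃X₃ᵀ` generate `M₂(ℝ)` as soon as `b ≠ 0`, so the
corner `E₀₀ ⊗ M₂(ℝ)` is in the algebra, and the invertible connectors spread it to all blocks.
This proves the statement over `ℝ`, and the complex statement follows by extension of scalars.
-/

namespace Matrix

theorem transpose_fin_two_of {α : Type*} (a b c d : α) :
    !![a, b; c, d]ᵀ = !![a, c; b, d] := by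
  ext i j; fin_cases i <;> fin_cases j <;> rfl

theorem adjoin_diag_antidiag_eq_top {K : Type*} [Field K] [NeZero (2 : K)] :
    Algebra.adjoin K {!![1, 0; 0, -1], !![0, 1; 1, 0]} =
      (⊤ : Subalgebra K (Matrix (Fin 2) (Fin 2) K)) := by
  set S := Algebra.adjoin K {!![(1 : K), 0; 0, -1], !![(0 : K), 1; 1, 0]}
  have hz : !![(1 : K), 0; 0, -1] ∈ S := Algebra.subset_adjoin (by simp)
  have hx : !![(0 : K), 1; 1, 0] ∈ S := Algebra.subset_adjoin (by simp)
  refine eq_top_iff.2 fun m _ => ?_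
  have hm : m = ((m 0 0 + m 1 1) / 2) • 1 + ((m 0 0 - m 1 1) / 2) • !![(1 : K), 0; 0, -1]
      + ((m 0 1 + m 1 0) / 2) • !![(0 : K), 1; 1, 0]
      + ((m 0 1 - m 1 0) / 2) • (!![(1 : K), 0; 0, -1] * !![(0 : K), 1; 1, 0]) := by
    ext a c
    fin_cases a <;> fin_cases c <;> simp <;> field_simp <;> ring
  rw [hm]
  exact S.add_mem (S.add_mem (S.add_mem (S.smul_mem S.one_mem _) (S.smul_mem hz _))
    (S.smul_mem hx _)) (S.smul_mem (S.mul_mem hz hx) _)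

theorem adjoin_map_algebraMap_eq_top {R A m : Type*} [CommSemiring R] [CommSemiring A]
    [Algebra R A] [Fintype m] [DecidableEq m] {s : Set (Matrix m m R)}
    (hs : Algebra.adjoin R s = ⊤) :
    Algebra.adjoin A ((fun M => M.map (algebraMap R A)) '' s) = ⊤ := by
  set T := Algebra.adjoin A ((fun M => M.map (algebraMap R A)) '' s)
  let f : Matrix m m R →ₐ[R] Matrix m m A := (Algebra.ofId R A).mapMatrix
  have hle : Algebra.adjoin R s ≤ (T.restrictScalars R).comap f :=
    Algebra.adjoin_le fun M hM => Algebra.subset_adjoin ⟨M, hM, rfl⟩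
  have hf : ∀ M, f M ∈ T := fun M => hle (hs ▸ Algebra.mem_top)
  refine eq_top_iff.2 fun N _ => ?_
  rw [matrix_eq_sum_single N]
  refine T.sum_mem fun i _ => T.sum_mem fun j _ => ?_
  have hN : single i j (N i j) = N i j • f (single i j 1) := by
    simp [f, smul_single]
  rw [hN]
  exact T.smul_mem (hf _) _

section Blocks

variable {R A ι : Type*} [CommSemiring R] [Semiring A] [Algebra R A] [Fintype ι] [DecidableEq ι]

theorem single_mem_of_adjoin_eq_top {S : Subalgebra R (Matrix ι ι A)} {i : ι} {s : Set A}
    (hs : Algebra.adjoin R s = ⊤) (hone : single i i 1 ∈ S) (hsS : ∀ a ∈ s, single i i a ∈ S)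
    (a : A) : single i i a ∈ S := by
  let T : Subalgebra R A :=
    { carrier := {a | single i i a ∈ S}
      mul_mem' := fun {x y} hx hy => by
        simpa only [Set.mem_ofPred_eq, single_mul_single_same] using S.mul_mem hx hy
      add_mem' := fun {x y} hx hy => by
        simpa only [Set.mem_ofPred_eq, single_add] using S.add_mem hx hy
      algebraMap_mem' := fun r => by
        simpa only [Set.mem_ofPred_eq, Algebra.algebraMap_eq_smul_one, smul_single]
          using S.smul_mem hone r }
  exact (Algebra.adjoin_le (S := T) hsS) (hs ▸ Algebra.mem_top)

theorem subalgebra_eq_top_of_single_mem {S : Subalgebra R (Matrix ι ι A)} (i₀ : ι)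
    (hcorner : ∀ a, single i₀ i₀ a ∈ S)
    (hrow : ∀ j, ∃ x, IsUnit x ∧ single i₀ j x ∈ S)
    (hcol : ∀ i, ∃ y, IsUnit y ∧ single i i₀ y ∈ S) : S = ⊤ := by
  have single_mem : ∀ i j a, single i j a ∈ S := by
    intro i j a
    obtain ⟨_, ⟨x, rfl⟩, hx⟩ := hrow j
    obtain ⟨_, ⟨y, rfl⟩, hy⟩ := hcol i
    have hfactor : single i j a =
        single i i₀ (y : A) * single i₀ i₀ (↑y⁻¹ * a * ↑x⁻¹) * single i₀ j (x : A) := by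
      simp [mul_assoc]
    rw [hfactor]
    exact S.mul_mem (S.mul_mem hy (hcorner _)) hx
  refine eq_top_iff.2 fun M _ => ?_
  rw [matrix_eq_sum_single M]
  exact S.sum_mem fun i _ => S.sum_mem fun j _ => single_mem i j _

end Blocks

theorem single_one_mem_adjoin_diagonal {K A ι : Type*} [Field K] [Ring A] [Algebra K A]
    [Fintype ι] [DecidableEq ι] {c : ι → K} (hc : Function.Injective c) (i : ι) :
    single i i (1 : A) ∈ Algebra.adjoin K {diagonal fun j => algebraMap K A (c j)} := by
  let f : (ι → K) →ₐ[K] Matrix ι ι A := (diagonalAlgHom K).comp ((Algebra.ofId K A).compLeft ι)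
  have heval : Polynomial.aeval c (Lagrange.basis Finset.univ c i) = Pi.single i 1 := by
    ext j
    rw [Polynomial.aeval_fn_apply, Polynomial.coe_aeval_eq_eval]
    obtain rfl | hij := eq_or_ne j i
    · rw [Lagrange.eval_basis_self hc.injOn (Finset.mem_univ _), Pi.single_eq_same]
    · rw [Lagrange.eval_basis_of_ne hij.symm (Finset.mem_univ _), Pi.single_eq_of_ne hij]
  have hf : f (Pi.single i 1) = single i i 1 := by
    change diagonal (fun j => algebraMap K A ((Pi.single i 1 : ι → K) j)) = _
    rw [← diagonal_single]
    congr 1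
    ext j
    obtain rfl | hij := eq_or_ne j i <;> simp [*]
  rw [← hf, ← heval, ← Polynomial.aeval_algHom_apply]
  exact Polynomial.aeval_mem_adjoin_singleton K _

theorem compAlgEquiv_symm_apply_swap_of_isSymm {I J R : Type*} [Fintype I] [DecidableEq I]
    [Fintype J] [DecidableEq J] [CommSemiring R] {M : Matrix (I × J) (I × J) R} (hM : M.IsSymm)
    (i j : I) :
    (compAlgEquiv I J R R).symm M j i = ((compAlgEquiv I J R R).symm M i j)ᵀ := by
  ext a c
  simp [hM.apply]

end Matrix

theorem uM_mul_self : uM * uM = -1 := by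
  ext a c
  fin_cases a <;> fin_cases c <;> simp [uM]

/-- The 2-block `(i, j)` of `laffeyA`, indexed by natural numbers. -/
noncomputable def laffeyBlock (b : ℝ) (i j : ℕ) : Matrix (Fin 2) (Fin 2) ℝ :=
  if i = j then (i + 1) • uM else if i < j then upBlk b i j else -(upBlk b j i)ᵀ

theorem laffeyBlock_eq_zero (b : ℝ) {i j : ℕ} (hij : i ≠ j) (hi : i ≠ 0) (hj : j ≠ 0)
    (h4 : 4 ≤ i ∨ 4 ≤ j) : laffeyBlock b i j = 0 := by
  unfold laffeyBlock upBlk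
  split_ifs <;> first | omega | simp

theorem laffeyBlock_transpose (b : ℝ) (i j : ℕ) : (laffeyBlock b i j)ᵀ = -laffeyBlock b j i := by
  unfold laffeyBlock
  rcases lt_trichotomy i j with h | rfl | h
  · simp [h, h.ne, h.ne', h.not_gt]
  · simp [uM, transpose_fin_two_of]
  · simp [h, h.ne, h.ne', h.not_gt]

theorem laffeyBlock_mul_uM_add_uM_mul (b : ℝ) {i j : ℕ} (hij : i ≠ j) :
    laffeyBlock b i j * uM + uM * laffeyBlock b i j = 0 := by
  rw [laffeyBlock, if_neg hij]
  ext a c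
  unfold upBlk
  split_ifs <;> fin_cases a <;> fin_cases c <;> simp [alphaM, betaM, uM, transpose_fin_two_of]

theorem laffeyA_apply (n : ℕ) (b : ℝ) (p q : Fin n × Fin 2) :
    laffeyA n b p q = laffeyBlock b p.1 q.1 p.2 q.2 := by
  unfold laffeyA laffeyBlock
  simp only [of_apply, Fin.val_inj]
  split_ifs <;> rfl

theorem laffeyA_transpose (n : ℕ) (b : ℝ) : (laffeyA n b)ᵀ = -laffeyA n b := by
  ext p q
  rw [transpose_apply, neg_apply, laffeyA_apply, laffeyA_apply, ← neg_apply,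
    ← laffeyBlock_transpose, transpose_apply]

noncomputable def laffeyH (n : ℕ) (b : ℝ) : Matrix (Fin n × Fin 2) (Fin n × Fin 2) ℝ :=
  laffeyA n b * laffeyA n b

noncomputable def laffeyK (n : ℕ) (b : ℝ) : Matrix (Fin n × Fin 2) (Fin n × Fin 2) ℝ :=
  laffeyA n b * laffeyB n + laffeyB n * laffeyA n b

theorem laffeyH_isSymm (n : ℕ) (b : ℝ) : (laffeyH n b).IsSymm := by
  rw [IsSymm, laffeyH, transpose_mul, laffeyA_transpose, neg_mul_neg]

theorem compAlgEquiv_symm_laffeyA (n : ℕ) (b : ℝ) :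
    (compAlgEquiv (Fin n) (Fin 2) ℝ ℝ).symm (laffeyA n b) =
      of fun i j : Fin n => laffeyBlock b i j := by
  ext i j a c
  simp [laffeyA_apply]

theorem compAlgEquiv_symm_laffeyB (n : ℕ) :
    (compAlgEquiv (Fin n) (Fin 2) ℝ ℝ).symm (laffeyB n) = diagonal fun _ => uM := by
  ext i j a c
  by_cases h : i = j <;> simp [laffeyB, h]

theorem compAlgEquiv_symm_laffeyK (n : ℕ) (b : ℝ) :
    (compAlgEquiv (Fin n) (Fin 2) ℝ ℝ).symm (laffeyK n b)
      = diagonal fun i : Fin n => algebraMap ℝ _ (-2 * ((i : ℕ) + 1)) := by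
  rw [laffeyK, map_add, map_mul, map_mul, compAlgEquiv_symm_laffeyA, compAlgEquiv_symm_laffeyB]
  ext i j : 1
  rw [Matrix.add_apply, mul_diagonal, diagonal_mul, of_apply]
  obtain rfl | hij := eq_or_ne i j
  · rw [diagonal_apply_eq, laffeyBlock, if_pos rfl, smul_mul_assoc, mul_smul_comm, uM_mul_self,
      Algebra.algebraMap_eq_smul_one, ← Nat.cast_smul_eq_nsmul ℝ]
    push_cast
    module
  · rw [laffeyBlock_mul_uM_add_uM_mul b (Fin.val_ne_of_ne hij), diagonal_apply_ne _ hij]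

theorem single_one_mem_adjoin_laffeyK (n : ℕ) (b : ℝ) (i : Fin n) :
    single i i 1 ∈ Algebra.adjoin ℝ {(compAlgEquiv (Fin n) (Fin 2) ℝ ℝ).symm (laffeyK n b)} := by
  have hinj : Function.Injective fun i : Fin n => (-2 * ((i : ℕ) + 1) : ℝ) :=
    fun i j h => Fin.ext (by simpa using h)
  rw [compAlgEquiv_symm_laffeyK]
  exact single_one_mem_adjoin_diagonal hinj i

/-- The 2-block `(0, j)` of `laffeyH n b`, for `1 ≤ j < n`. -/
noncomputable def laffeyRowBlock (b : ℝ) (j : ℕ) : Matrix (Fin 2) (Fin 2) ℝ :=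
  if j = 1 then !![-2, b - 1; -b - 1, -2]
  else if j = 2 then !![1, -2; -2, 1]
  else if j = 3 then !![1 + 3 * b, -3; -3, 1 - 3 * b]
  else !![0, -j; -j, 0]

theorem sum_laffeyBlock_zero_mul (b : ℝ) {n j : ℕ} (hn : 4 ≤ n) (hj : 1 ≤ j) (hjn : j < n) :
    ∑ k ∈ Finset.range n, laffeyBlock b 0 k * laffeyBlock b k j = laffeyRowBlock b j := by
  rcases lt_or_ge j 4 with hj4 | hj4
  · rw [← Finset.sum_subset (Finset.range_subset_range.2 hn) fun k _ hk => by
      rw [Finset.mem_range, not_lt] at hk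
      rw [laffeyBlock_eq_zero b (i := k) (j := j) (by omega) (by omega) (by omega) (by omega),
        mul_zero]]
    interval_cases j <;>
      simp [Finset.sum_range_succ, laffeyBlock, upBlk, laffeyRowBlock, alphaM, betaM, uM,
        transpose_fin_two_of] <;> ring_nf <;> simp only [and_self]
  · rw [Finset.sum_eq_add_of_mem 0 j (by simp; omega) (by simp; omega) (by omega)
      fun k _ hk => by rw [laffeyBlock_eq_zero b hk.2 hk.1 (by omega) (by omega), mul_zero]]
    obtain ⟨h0, h1, h2, h3⟩ : 0 ≠ j ∧ j ≠ 1 ∧ j ≠ 2 ∧ j ≠ 3 := by omega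
    simp [laffeyBlock, upBlk, laffeyRowBlock, alphaM, uM, h0, h1, h2, h3,
      Nat.pos_of_ne_zero h0.symm]

theorem compAlgEquiv_symm_laffeyH_apply {n : ℕ} (hn : 4 ≤ n) (b : ℝ) {i₀ j : Fin n}
    (hi₀ : (i₀ : ℕ) = 0) (hj : 1 ≤ (j : ℕ)) :
    (compAlgEquiv (Fin n) (Fin 2) ℝ ℝ).symm (laffeyH n b) i₀ j = laffeyRowBlock b j := by
  rw [laffeyH, map_mul, compAlgEquiv_symm_laffeyA, mul_apply]
  simp only [of_apply, hi₀]
  rw [Fin.sum_univ_eq_sum_range (fun k => laffeyBlock b 0 k * laffeyBlock b k j),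
    sum_laffeyBlock_zero_mul b hn hj j.isLt]

theorem isUnit_laffeyRowBlock (b : ℝ) {j : ℕ} (hj : 1 ≤ j) : IsUnit (laffeyRowBlock b j) := by
  rw [isUnit_iff_isUnit_det, isUnit_iff_ne_zero, laffeyRowBlock]
  have : (1 : ℝ) ≤ j := by exact_mod_cast hj
  split_ifs <;> rw [det_fin_two_of] <;> nlinarith [sq_nonneg b]

theorem adjoin_laffeyRowBlock_gram_eq_top {b : ℝ} (hb : b ≠ 0) :
    Algebra.adjoin ℝ {laffeyRowBlock b 1 * (laffeyRowBlock b 1)ᵀ,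
      laffeyRowBlock b 3 * (laffeyRowBlock b 3)ᵀ} = ⊤ := by
  set G₁ := laffeyRowBlock b 1 * (laffeyRowBlock b 1)ᵀ with hG₁
  set G₃ := laffeyRowBlock b 3 * (laffeyRowBlock b 3)ᵀ with hG₃
  set S := Algebra.adjoin ℝ {G₁, G₃}
  -- With `Z = !![1, 0; 0, -1]` and `X = !![0, 1; 1, 0]`: `G₁ = (b² + 5) - 2b Z + 4X` and
  -- `G₃ = (9b² + 10) + 6b Z - 6X`, and the coefficient matrix of `(Z, X)` has determinant `-12b`.
  have hz : !![(1 : ℝ), 0; 0, -1] = (6 * b)⁻¹ • (3 • G₁ + 2 • G₃ - (35 + 21 * b ^ 2) • 1) := by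
    ext a c
    fin_cases a <;> fin_cases c <;> simp [hG₁, hG₃, laffeyRowBlock, transpose_fin_two_of, hb] <;>
      field_simp <;> ring
  have hx : !![(0 : ℝ), 1; 1, 0] = (6 : ℝ)⁻¹ • (3 • G₁ + G₃ - (25 + 12 * b ^ 2) • 1) := by
    ext a c
    fin_cases a <;> fin_cases c <;> simp [hG₁, hG₃, laffeyRowBlock, transpose_fin_two_of] <;>
      field_simp <;> ring
  have hG₁S : G₁ ∈ S := Algebra.subset_adjoin (by simp)
  have hG₃S : G₃ ∈ S := Algebra.subset_adjoin (by simp)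
  rw [eq_top_iff, ← adjoin_diag_antidiag_eq_top, Algebra.adjoin_le_iff]
  rintro _ (rfl | rfl)
  · rw [hz]
    exact S.smul_mem (S.sub_mem (S.add_mem (S.nsmul_mem hG₁S _) (S.nsmul_mem hG₃S _))
      (S.smul_mem S.one_mem _)) _
  · rw [hx]
    exact S.smul_mem (S.sub_mem (S.add_mem (S.nsmul_mem hG₁S _) hG₃S)
      (S.smul_mem S.one_mem _)) _

theorem adjoin_compAlgEquiv_symm_laffey_eq_top {n : ℕ} (hn : 4 ≤ n) {b : ℝ} (hb : b ≠ 0) :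
    Algebra.adjoin ℝ {(compAlgEquiv (Fin n) (Fin 2) ℝ ℝ).symm (laffeyH n b),
      (compAlgEquiv (Fin n) (Fin 2) ℝ ℝ).symm (laffeyK n b)} = ⊤ := by
  set H := (compAlgEquiv (Fin n) (Fin 2) ℝ ℝ).symm (laffeyH n b)
  set S := Algebra.adjoin ℝ {H, (compAlgEquiv (Fin n) (Fin 2) ℝ ℝ).symm (laffeyK n b)}
  have hproj : ∀ i, single i i 1 ∈ S := fun i =>
    Algebra.adjoin_mono (by simp) (single_one_mem_adjoin_laffeyK n b i)
  have hblock : ∀ i j, single i j (H i j) ∈ S := fun i j => by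
    simpa using S.mul_mem (S.mul_mem (hproj i) (Algebra.subset_adjoin (by simp))) (hproj j)
  let i₀ : Fin n := ⟨0, by omega⟩
  have hrow : ∀ j : Fin n, 1 ≤ (j : ℕ) → single i₀ j (laffeyRowBlock b j) ∈ S := fun j hj => by
    rw [← compAlgEquiv_symm_laffeyH_apply hn b (i₀ := i₀) rfl hj]
    exact hblock i₀ j
  have hcol : ∀ j : Fin n, 1 ≤ (j : ℕ) → single j i₀ (laffeyRowBlock b j)ᵀ ∈ S := fun j hj => by
    rw [← compAlgEquiv_symm_laffeyH_apply hn b (i₀ := i₀) rfl hj,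
      ← compAlgEquiv_symm_apply_swap_of_isSymm (laffeyH_isSymm n b)]
    exact hblock j i₀
  have hgram : ∀ j : Fin n, 1 ≤ (j : ℕ) →
      single i₀ i₀ (laffeyRowBlock b j * (laffeyRowBlock b j)ᵀ) ∈ S := fun j hj => by
    simpa using S.mul_mem (hrow j hj) (hcol j hj)
  have hcorner : ∀ a, single i₀ i₀ a ∈ S :=
    single_mem_of_adjoin_eq_top (adjoin_laffeyRowBlock_gram_eq_top hb) (hproj i₀) (by
      rintro _ (rfl | rfl)
      exacts [hgram ⟨1, by omega⟩ le_rfl, hgram ⟨3, by omega⟩ (by simp)])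
  refine subalgebra_eq_top_of_single_mem i₀ hcorner (fun j => ?_) (fun j => ?_)
  all_goals
    rcases Nat.eq_zero_or_pos (j : ℕ) with h | h
    · obtain rfl : j = i₀ := Fin.ext h
      exact ⟨1, isUnit_one, hcorner 1⟩
  · exact ⟨_, isUnit_laffeyRowBlock b h, hrow j h⟩
  · exact ⟨_, (isUnit_transpose _).2 (isUnit_laffeyRowBlock b h), hcol j h⟩

theorem adjoin_laffeyH_laffeyK_eq_top {n : ℕ} (hn : 4 ≤ n) {b : ℝ} (hb : b ≠ 0) :
    Algebra.adjoin ℝ {laffeyH n b, laffeyK n b} = ⊤ := by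
  let e := compAlgEquiv (Fin n) (Fin 2) ℝ ℝ
  have h := Algebra.adjoin_image ℝ e.toAlgHom {e.symm (laffeyH n b), e.symm (laffeyK n b)}
  rwa [Set.image_pair, AlgEquiv.coe_toAlgHom, e.apply_symm_apply, e.apply_symm_apply,
    adjoin_compAlgEquiv_symm_laffey_eq_top hn hb, Algebra.map_top,
    (AlgHom.range_eq_top _).2 e.surjective] at h

/-- For the Laffey-type family, the complexifications of `H := A²` and
`K := AB + BA` generate the full matrix algebra `M_{2n}(ℂ)`. Together with the
even-multiplicity property of the eigenvalues of `x • H + y • K`, this gives a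
one-parameter family of counterexamples to Kippenhahn's conjecture in every even
size `2n ≥ 8`. -/
theorem laffey_family_generates_full_algebra
    (n : ℕ) (hn : 4 ≤ n) (b : ℝ) (hb : b ≠ 0) :
    Algebra.adjoin ℂ
      {(laffeyA n b * laffeyA n b).map (algebraMap ℝ ℂ),
       (laffeyA n b * laffeyB n + laffeyB n * laffeyA n b).map (algebraMap ℝ ℂ)} = ⊤ := by
  have h := adjoin_map_algebraMap_eq_top (A := ℂ) (adjoin_laffeyH_laffeyK_eq_top hn hb)
  rwa [Set.image_pair] at h
end
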